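/- arXiv:1210.4805 — 5 statements merged into one kernel-verified Lean document; each statement's English description precedes it below -/
import Mathlib

section
/- For a nondecreasing bounded function μ on [0,1] with μ(1) - μ(0) = 1, the function F(z) = √(1+z)·∫₀¹ dμ(u)/(1+zu) is holomorphic on H = ℂ∖(-∞,-1], maps H into the right half-plane, and is positive on (-1,+∞). -/
/-!
With `c = (1 + z) ^ (1/2)` we have `0 < re c` and `1 + z u = (1 - u) + u c²`, so
`(1 + z u) / c = (1 - u) c⁻¹ + u c` is a convex combination of two points of the open right
half-plane. Hence it lies there, and so does its inverse `c / (1 + z u)`; integrating against `μ`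
keeps the real part positive. Holomorphy comes from differentiating under the integral sign,
`(1 + z u)⁻¹` being bounded on compact subsets of `H × [0,1]`.
-/

open Complex MeasureTheory

lemma one_add_mem_slitPlane_iff {z : ℂ} :
    1 + z ∈ slitPlane ↔ ¬(z.im = 0 ∧ z.re ≤ -1) := by
  rw [mem_slitPlane_iff, add_re, add_im, one_re, one_im, zero_add]
  constructor
  · rintro (h | h) ⟨h0, h1⟩ <;> [linarith; exact h h0]
  · intro h
    by_cases h0 : z.im = 0
    · exact Or.inl (by linarith [not_le.1 fun h1 => h ⟨h0, h1⟩])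
    · exact Or.inr h0

lemma re_cpow_half_pos {w : ℂ} (hw : w ∈ slitPlane) : 0 < (w ^ ((1:ℂ)/2)).re := by
  rw [cpow_def_of_ne_zero (slitPlane_ne_zero hw), exp_re]
  have him : (log w * ((1:ℂ)/2)).im = w.arg / 2 := by
    simp [mul_im, log_im]; ring
  have hlt : w.arg < Real.pi := lt_of_le_of_ne (arg_le_pi w) (slitPlane_arg_ne_pi hw)
  have hcos : 0 < Real.cos (w.arg / 2) :=
    Real.cos_pos_of_mem_Ioo ⟨by linarith [neg_pi_lt_arg w], by linarith⟩
  rw [him]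
  positivity

lemma cpow_half_sq (w : ℂ) : (w ^ ((1:ℂ)/2)) ^ 2 = w := by
  rw [one_div]; exact_mod_cast cpow_nat_inv_pow w two_ne_zero

lemma re_inv_pos {w : ℂ} (hw : 0 < w.re) : 0 < (w⁻¹).re := by
  rw [inv_re]
  exact div_pos hw (normSq_pos.2 fun h => by simp [h] at hw)

lemma re_one_sub_add_mul_sq_div_pos {c : ℂ} (hc : 0 < c.re) {t : ℝ}
    (ht : t ∈ Set.Icc (0:ℝ) 1) :
    0 < ((1 - t + t * c ^ 2) / c).re := by
  have hc0 : c ≠ 0 := fun h => by simp [h] at hc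
  have hsplit : (1 - t + t * c ^ 2) / c = (1 - t : ℝ) * c⁻¹ + (t : ℝ) * c := by
    field_simp; push_cast; ring
  rw [hsplit, add_re, re_ofReal_mul, re_ofReal_mul]
  have hinv := re_inv_pos hc
  obtain ⟨ht0, ht1⟩ := ht
  rcases ht0.lt_or_eq with ht0 | rfl
  · nlinarith
  · simpa using hinv

lemma one_add_mul_eq_one_sub_add_mul_cpow_half_sq (z : ℂ) (u : ℝ) :
    1 + z * u = 1 - u + u * ((1 + z) ^ ((1:ℂ)/2)) ^ 2 := by
  rw [cpow_half_sq]; ring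

lemma one_add_mul_ne_zero {z : ℂ} (hz : 1 + z ∈ slitPlane) {u : ℝ}
    (hu : u ∈ Set.Icc (0:ℝ) 1) :
    1 + z * u ≠ 0 := by
  have hre := re_one_sub_add_mul_sq_div_pos (re_cpow_half_pos hz) hu
  rw [← one_add_mul_eq_one_sub_add_mul_cpow_half_sq] at hre
  intro h
  simp [h] at hre

lemma re_cpow_half_mul_inv_pos {z : ℂ} (hz : 1 + z ∈ slitPlane) {u : ℝ}
    (hu : u ∈ Set.Icc (0:ℝ) 1) : 0 < ((1 + z) ^ ((1:ℂ)/2) * (1 + z * u)⁻¹).re := by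
  have hre := re_inv_pos (re_one_sub_add_mul_sq_div_pos (re_cpow_half_pos hz) hu)
  rwa [← one_add_mul_eq_one_sub_add_mul_cpow_half_sq, inv_div, div_eq_mul_inv] at hre

lemma exists_norm_inv_one_add_mul_le {s : Set ℂ} (hs : IsCompact s)
    (hsH : ∀ z ∈ s, 1 + z ∈ slitPlane) :
    ∃ C, ∀ z ∈ s, ∀ u ∈ Set.Icc (0:ℝ) 1, ‖(1 + z * u)⁻¹‖ ≤ C := by
  have hcont : ContinuousOn (fun p : ℂ × ℝ => (1 + p.1 * p.2)⁻¹) (s ×ˢ Set.Icc 0 1) :=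
    (by fun_prop : Continuous fun p : ℂ × ℝ => 1 + p.1 * p.2).continuousOn.inv₀
      fun p hp => one_add_mul_ne_zero (hsH p.1 hp.1) hp.2
  obtain ⟨C, hC⟩ := (hs.prod isCompact_Icc).exists_bound_of_continuousOn hcont
  exact ⟨C, fun z hz u hu => hC (z, u) ⟨hz, hu⟩⟩

lemma re_integral_pos {α : Type*} [MeasurableSpace α] {μ : Measure α} [NeZero μ] {f : α → ℂ}
    (hf : Integrable f μ) (hpos : ∀ᵐ x ∂μ, 0 < (f x).re) : 0 < (∫ x, f x ∂μ).re := by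
  have hre : (∫ x, f x ∂μ).re = ∫ x, (f x).re ∂μ := (integral_re hf).symm
  rw [hre, integral_pos_iff_support_of_nonneg_ae (hpos.mono fun _ h => h.le) hf.re,
    pos_iff_ne_zero]
  intro h
  obtain ⟨x, hx, hx0⟩ := (hpos.and (ae_iff.2 h)).exists
  exact hx.ne' hx0

section SupportedOnUnitInterval

variable {μ : Measure ℝ} [IsFiniteMeasure μ]

lemma integrable_inv_one_add_mul (hμ : ∀ᵐ u ∂μ, u ∈ Set.Icc (0:ℝ) 1) {z : ℂ}
    (hz : 1 + z ∈ slitPlane) :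
    Integrable (fun u : ℝ => (1 + z * u)⁻¹) μ := by
  obtain ⟨C, hC⟩ := exists_norm_inv_one_add_mul_le isCompact_singleton (by simpa using hz)
  exact .of_bound (by fun_prop) C (hμ.mono fun u hu => hC z rfl u hu)

lemma differentiableAt_integral_inv_one_add_mul (hμ : ∀ᵐ u ∂μ, u ∈ Set.Icc (0:ℝ) 1)
    {z₀ : ℂ} (hz₀ : 1 + z₀ ∈ slitPlane) :
    DifferentiableAt ℂ (fun z : ℂ => ∫ u : ℝ, (1 + z * u)⁻¹ ∂μ) z₀ := by
  have hopen : IsOpen {z : ℂ | 1 + z ∈ slitPlane} :=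
    isOpen_slitPlane.preimage (by fun_prop)
  obtain ⟨ε, hε, hball⟩ := Metric.isOpen_iff.1 hopen z₀ hz₀
  have hclosed : Metric.closedBall z₀ (ε / 2) ⊆ {z : ℂ | 1 + z ∈ slitPlane} :=
    (Metric.closedBall_subset_ball (by linarith)).trans hball
  obtain ⟨C, hC⟩ := exists_norm_inv_one_add_mul_le (isCompact_closedBall z₀ (ε / 2)) hclosed
  have hderiv : ∀ u ∈ Set.Icc (0:ℝ) 1, ∀ z ∈ Metric.ball z₀ (ε / 2),
      HasDerivAt (fun z : ℂ => (1 + z * u)⁻¹) (-(((1 + z * u) ^ 2)⁻¹ * u)) z := by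
    intro u hu z hz
    have hne := one_add_mul_ne_zero (hclosed (Metric.ball_subset_closedBall hz)) hu
    have hlin : HasDerivAt (fun z : ℂ => 1 + z * u) u z := by
      simpa using ((hasDerivAt_id z).mul_const (u : ℂ)).const_add 1
    simpa [Function.comp_def] using (hasDerivAt_inv hne).comp z hlin
  have hbound : ∀ u ∈ Set.Icc (0:ℝ) 1, ∀ z ∈ Metric.ball z₀ (ε / 2),
      ‖-(((1 + z * u) ^ 2)⁻¹ * (u : ℂ))‖ ≤ C ^ 2 := by
    intro u hu z hz
    have hu1 : ‖(u : ℂ)‖ ≤ 1 := by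
      rw [norm_real, Real.norm_of_nonneg hu.1]; exact hu.2
    rw [norm_neg, norm_mul, ← inv_pow, norm_pow]
    calc ‖(1 + z * u)⁻¹‖ ^ 2 * ‖(u : ℂ)‖ ≤ C ^ 2 * 1 := by
          gcongr
          exact hC z (Metric.ball_subset_closedBall hz) u hu
      _ = C ^ 2 := mul_one _
  exact (hasDerivAt_integral_of_dominated_loc_of_deriv_le
    (Metric.ball_mem_nhds z₀ (by positivity)) (.of_forall fun z => by fun_prop)
    (integrable_inv_one_add_mul hμ hz₀) (by fun_prop)
    (hμ.mono fun u hu => hbound u hu) (integrable_const _)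
    (hμ.mono fun u hu => hderiv u hu)).2.differentiableAt

lemma re_cpow_half_mul_integral_pos [NeZero μ] (hμ : ∀ᵐ u ∂μ, u ∈ Set.Icc (0:ℝ) 1) {z : ℂ}
    (hz : 1 + z ∈ slitPlane) :
    0 < ((1 + z) ^ ((1:ℂ)/2) * ∫ u : ℝ, (1 + z * u)⁻¹ ∂μ).re := by
  rw [← integral_const_mul]
  exact re_integral_pos ((integrable_inv_one_add_mul hμ hz).const_mul _)
    (hμ.mono fun u hu => re_cpow_half_mul_inv_pos hz hu)

end SupportedOnUnitInterval

lemma im_integral_inv_one_add_ofReal_mul (μ : Measure ℝ) (x : ℝ) :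
    (∫ u : ℝ, (1 + (x : ℂ) * u)⁻¹ ∂μ).im = 0 := by
  have hreal : ∀ u : ℝ, (1 + (x : ℂ) * u)⁻¹ = ((1 + x * u)⁻¹ : ℝ) := fun u => by
    push_cast; rfl
  rw [integral_congr_ae (.of_forall hreal), integral_complex_ofReal, ofReal_im]

lemma im_cpow_half_ofReal {x : ℝ} (hx : 0 ≤ x) : ((x : ℂ) ^ ((1:ℂ)/2)).im = 0 := by
  rw [← ofReal_one, ← ofReal_ofNat, ← ofReal_div, ← ofReal_cpow hx, ofReal_im]

/-- For a probability measure `μ` on `[0,1] ⊂ ℝ`, the function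
`F(z) = √(1+z) · ∫₀¹ dμ(u)/(1+zu)` (principal branch of the square root)
is holomorphic on `H = ℂ ∖ (-∞,-1]`, maps `H` into the right half-plane,
and is positive on `(-1,∞)`. -/
theorem sqrt_stieltjes_transform (μ : Measure ℝ) [IsProbabilityMeasure μ]
    (hsupp : μ (Set.Icc (0:ℝ) 1)ᶜ = 0) :
    DifferentiableOn ℂ
        (fun z : ℂ => (1 + z) ^ ((1:ℂ)/2) * ∫ u : ℝ, (1 + z * (u:ℂ))⁻¹ ∂μ)
        {z : ℂ | ¬(z.im = 0 ∧ z.re ≤ -1)} ∧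
    (∀ z ∈ {z : ℂ | ¬(z.im = 0 ∧ z.re ≤ -1)},
      0 < ((1 + z) ^ ((1:ℂ)/2) * ∫ u : ℝ, (1 + z * (u:ℂ))⁻¹ ∂μ).re) ∧
    (∀ x : ℝ, -1 < x →
      ((1 + (x:ℂ)) ^ ((1:ℂ)/2) * ∫ u : ℝ, (1 + (x:ℂ) * (u:ℂ))⁻¹ ∂μ).im = 0 ∧
      0 < ((1 + (x:ℂ)) ^ ((1:ℂ)/2) * ∫ u : ℝ, (1 + (x:ℂ) * (u:ℂ))⁻¹ ∂μ).re) := by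
  have hμ : ∀ᵐ u ∂μ, u ∈ Set.Icc (0:ℝ) 1 := hsupp
  refine ⟨fun z hz => ?_, fun z hz => ?_, fun x hx => ⟨?_, ?_⟩⟩
  · have hz' := one_add_mem_slitPlane_iff.2 hz
    exact (((differentiableAt_id.const_add 1).cpow (differentiableAt_const _) hz').mul
      (differentiableAt_integral_inv_one_add_mul hμ hz')).differentiableWithinAt
  · exact re_cpow_half_mul_integral_pos hμ (one_add_mem_slitPlane_iff.2 hz)
  · have h1x : (1 + (x : ℂ)) = ((1 + x : ℝ) : ℂ) := by push_cast; rfl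
    rw [mul_im, im_integral_inv_one_add_ofReal_mul, h1x, im_cpow_half_ofReal (by linarith)]
    ring
  · refine re_cpow_half_mul_integral_pos hμ ?_
    rw [← ofReal_one, ← ofReal_add, ofReal_mem_slitPlane]
    linarith
end

section
/- Let g₁, g₂ ∈ (0,1) and x ∈ [0,∞). Then A₂⁺(x) ≤ B₂⁺(x), where A₂⁺(x) = ((1-g₁g₂)x+1)/((1+x)(g₁(1-g₂)x+1)) and B₂⁺(x) = (g₂(1-g₁)x+1)/((g₁-g₁g₂+g₂)x+1). -/
/-- Let `g₁, g₂ ∈ (0,1)` and `x ≥ 0`. Then `A₂⁺(x) ≤ B₂⁺(x)`, where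
`A₂⁺(x) = ((1-g₁g₂)x+1)/((1+x)(g₁(1-g₂)x+1))` and
`B₂⁺(x) = (g₂(1-g₁)x+1)/((g₁-g₁g₂+g₂)x+1)`. -/
theorem A2_plus_le_B2_plus (g₁ g₂ : ℝ) (hg₁ : g₁ ∈ Set.Ioo (0:ℝ) 1)
    (hg₂ : g₂ ∈ Set.Ioo (0:ℝ) 1) (x : ℝ) (hx : 0 ≤ x) :
    ((1 - g₁*g₂)*x + 1) / ((1 + x) * (g₁*(1 - g₂)*x + 1)) ≤
      (g₂*(1 - g₁)*x + 1) / ((g₁ - g₁*g₂ + g₂)*x + 1) := by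
  obtain ⟨h1, h2⟩ := hg₁
  obtain ⟨h3, h4⟩ := hg₂
  have ha : 0 ≤ g₁*(1 - g₂) := mul_nonneg h1.le (by linarith)
  have hd1 : 0 < (1 + x) * (g₁*(1 - g₂)*x + 1) := by
    have : 0 ≤ g₁*(1 - g₂)*x := mul_nonneg ha hx
    nlinarith
  have hd2 : 0 < (g₁ - g₁*g₂ + g₂)*x + 1 := by nlinarith [mul_nonneg ha hx, mul_nonneg h3.le hx]
  rw [div_le_div_iff₀ hd1 hd2]
  nlinarith [mul_nonneg (mul_nonneg (mul_nonneg (mul_nonneg (mul_nonneg h1.le h3.le)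
    (by linarith : (0:ℝ) ≤ 1 - g₁)) (by linarith : (0:ℝ) ≤ 1 - g₂)) (mul_nonneg hx hx)) hx]
end

section
/- Let f be holomorphic on the strip S_B = {|Im z| < B}, real on ℝ, with |f| < M, and suppose f(0) = M·(1 - 2/(μ₀ e^{πz/(2B)} g(e^{πz/B} - 1) + 1)) at z = 0 for the g-fraction representation. Then μ₀ = (1+θ₀)/(1-θ₀) and g₁ = (1 - 4θ₁ - θ₀²)/(2(1-θ₀²)), where θ₀ = f(0)/M and θ₁ = (B/(πM))·f'(0). In particular f'(0) > 0 iff g₁ < 1/2, f'(0) < 0 iff g₁ > 1/2, and f'(0) = 0 iff g₁ = 1/2. -/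
/-!
At `z = 0` the g-fraction contributes `g 0 = 1` and `g' 0 = -g₁`, so evaluating Wall's
representation and its derivative there gives `θ₀ (μ₀ + 1) = μ₀ - 1` and
`θ₁ (μ₀ + 1)² = μ₀ (1 - 2 g₁)`. The first relation gives `(1 - θ₀²)(μ₀ + 1)² = 4 μ₀`, so
eliminating `μ₀` yields `4 θ₁ = (1 - θ₀²)(1 - 2 g₁)` with `1 - θ₀² > 0`, from which both
formulas and the sign criterion follow.
-/

open Complex

noncomputable def wallRepresentation (M μ B : ℂ) (g : ℂ → ℂ) (z : ℂ) : ℂ :=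
  M * (1 - 2 / (μ * exp (Real.pi * z / (2 * B)) * g (exp (Real.pi * z / B) - 1) + 1))

section WallRepresentation

variable {M μ B g' : ℂ} {g : ℂ → ℂ}

theorem wallRepresentation_zero (hg0 : g 0 = 1) (hμ : μ + 1 ≠ 0) :
    wallRepresentation M μ B g 0 = M * ((μ - 1) / (μ + 1)) := by
  simp only [wallRepresentation, hg0, mul_zero, zero_div, exp_zero, sub_self, mul_one]
  field_simp
  ring

theorem hasDerivAt_wallRepresentation_zero (hg0 : g 0 = 1) (hg : HasDerivAt g g' 0)
    (hμ : μ + 1 ≠ 0) :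
    HasDerivAt (wallRepresentation M μ B g)
      (M * μ * (Real.pi / B) * (1 + 2 * g') / (μ + 1) ^ 2) 0 := by
  have hhalf : HasDerivAt (fun z : ℂ => exp (Real.pi * z / (2 * B))) (Real.pi / (2 * B)) 0 := by
    simpa using (((hasDerivAt_id (0:ℂ)).const_mul (Real.pi : ℂ)).div_const (2 * B)).cexp
  have hinner : HasDerivAt (fun z : ℂ => exp (Real.pi * z / B) - 1) (Real.pi / B) 0 := by
    simpa using ((((hasDerivAt_id (0:ℂ)).const_mul (Real.pi : ℂ)).div_const B).cexp).sub_const 1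
  have hcomp : HasDerivAt (fun z : ℂ => g (exp (Real.pi * z / B) - 1)) (g' * (Real.pi / B)) 0 :=
    (by simpa using hg : HasDerivAt g g' (exp (Real.pi * 0 / B) - 1)).comp 0 hinner
  have hden := ((hhalf.const_mul μ).mul hcomp).add_const 1
  have hden0 : μ * exp (Real.pi * 0 / (2 * B)) * g (exp (Real.pi * 0 / B) - 1) + 1 ≠ 0 := by
    simpa [hg0] using hμ
  refine ((((hasDerivAt_const (0:ℂ) (2:ℂ)).div hden hden0).const_sub 1).const_mul M).congr_deriv ?_
  simp only [Pi.mul_apply, hg0, mul_zero, zero_div, exp_zero, sub_self, mul_one]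
  field_simp
  ring

end WallRepresentation

theorem sign_iff_of_four_mul_eq {p t g : ℝ} (hp : 0 < p) (h : 4 * t = p * (1 - 2 * g)) :
    (0 < t ↔ g < 1/2) ∧ (t < 0 ↔ g > 1/2) ∧ (t = 0 ↔ g = 1/2) := by
  obtain rfl : t = p / 4 * (1 - 2 * g) := by linarith
  have hq : 0 < p / 4 := by positivity
  refine ⟨?_, ?_, ?_⟩
  · rw [mul_pos_iff_of_pos_left hq]; constructor <;> intro <;> linarith
  · rw [← mul_zero (p / 4), mul_lt_mul_iff_right₀ hq]; constructor <;> intro <;> linarith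
  · rw [mul_eq_zero, or_iff_right hq.ne']; constructor <;> intro <;> linarith

theorem wall_coefficients_of_relations {μ θ₀ θ₁ g₁ : ℝ} (hμ : 0 < μ)
    (h0 : θ₀ * (μ + 1) = μ - 1) (h1 : θ₁ * (μ + 1) ^ 2 = μ * (1 - 2 * g₁)) :
    μ = (1 + θ₀) / (1 - θ₀) ∧ g₁ = (1 - 4 * θ₁ - θ₀ ^ 2) / (2 * (1 - θ₀ ^ 2)) ∧
    (0 < θ₁ ↔ g₁ < 1/2) ∧ (θ₁ < 0 ↔ g₁ > 1/2) ∧ (θ₁ = 0 ↔ g₁ = 1/2) := by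
  have hsq : (1 - θ₀ ^ 2) * (μ + 1) ^ 2 = 4 * μ := by
    linear_combination (-(θ₀ * (μ + 1) + μ - 1)) * h0
  have hpos : 0 < 1 - θ₀ ^ 2 := by nlinarith
  have hθ₀ : 1 - θ₀ ≠ 0 := by nlinarith
  have key : 4 * θ₁ = (1 - θ₀ ^ 2) * (1 - 2 * g₁) := by
    refine mul_right_cancel₀ (pow_ne_zero 2 (by linarith : μ + 1 ≠ 0)) ?_
    linear_combination 4 * h1 - (1 - 2 * g₁) * hsq
  refine ⟨?_, ?_, sign_iff_of_four_mul_eq hpos key⟩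
  · rw [eq_div_iff hθ₀]
    linear_combination -h0
  · rw [eq_div_iff (by positivity)]
    linear_combination key

theorem g_fraction_first_coefficients_general (B M : ℝ) (hB : 0 < B) (hM : 0 < M)
    (f g : ℂ → ℂ) (μ₀ g₁ θ₀ θ₁ : ℝ) (hμ₀ : 0 < μ₀)
    (hg0 : g 0 = 1) (hgdiff : DifferentiableAt ℂ g 0) (hg1 : deriv g 0 = -g₁)
    (hrep : ∀ z ∈ {z : ℂ | |z.im| < B},
      f z = (M:ℂ) * (1 - 2 / ((μ₀:ℂ) * Complex.exp (Real.pi * z / (2*B)) *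
        g (Complex.exp (Real.pi * z / B) - 1) + 1)))
    (hθ₀ : f 0 = (M:ℂ) * (θ₀:ℂ))
    (hθ₁ : deriv f 0 = (Real.pi * M / B : ℂ) * (θ₁:ℂ)) :
    μ₀ = (1 + θ₀) / (1 - θ₀) ∧
    g₁ = (1 - 4*θ₁ - θ₀^2) / (2*(1 - θ₀^2)) ∧
    (0 < θ₁ ↔ g₁ < 1/2) ∧ (θ₁ < 0 ↔ g₁ > 1/2) ∧ (θ₁ = 0 ↔ g₁ = 1/2) := by
  have h0 : (0:ℂ) ∈ {z : ℂ | |z.im| < B} := by simp [hB]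
  have hstrip : {z : ℂ | |z.im| < B} ∈ nhds (0:ℂ) :=
    (isOpen_lt (continuous_abs.comp continuous_im) continuous_const).mem_nhds h0
  have hμ : (μ₀:ℂ) + 1 ≠ 0 := by exact_mod_cast (by positivity : μ₀ + 1 ≠ 0)
  have hval : (M:ℂ) * θ₀ = M * ((μ₀ - 1) / (μ₀ + 1)) :=
    hθ₀.symm.trans ((hrep 0 h0).trans (wallRepresentation_zero hg0 hμ))
  have hder : (Real.pi * M / B : ℂ) * θ₁ =
      M * μ₀ * (Real.pi / B) * (1 + 2 * -(g₁:ℂ)) / (μ₀ + 1) ^ 2 :=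
    hθ₁.symm.trans ((Filter.eventuallyEq_of_mem hstrip hrep).deriv_eq.trans
      (hasDerivAt_wallRepresentation_zero hg0 (hg1 ▸ hgdiff.hasDerivAt) hμ).deriv)
  have hM' : (M:ℂ) ≠ 0 := by exact_mod_cast hM.ne'
  have hB' : (B:ℂ) ≠ 0 := by exact_mod_cast hB.ne'
  refine wall_coefficients_of_relations hμ₀ ?_ ?_
  · field_simp at hval
    exact_mod_cast hval
  · field_simp at hder
    exact_mod_cast hder

/-- Let `f` be holomorphic on the strip `S_B`, real on `ℝ`, with `|f| < M`, and
suppose `f(z) = M(1 - 2/(μ₀ e^{πz/(2B)} g(e^{πz/B}-1) + 1))` on `S_B`, where `g`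
is the (analytic limit of the) g-fraction, with `g(0) = 1` and `g'(0) = -g₁`.
Then `μ₀ = (1+θ₀)/(1-θ₀)` and `g₁ = (1 - 4θ₁ - θ₀²)/(2(1-θ₀²))`, where
`θ₀ = f(0)/M` and `θ₁ = (B/(πM))·f'(0)`.  In particular `f'(0) > 0 ↔ g₁ < 1/2`,
`f'(0) < 0 ↔ g₁ > 1/2` and `f'(0) = 0 ↔ g₁ = 1/2`. -/
theorem g_fraction_first_coefficients (B M : ℝ) (hB : 0 < B) (hM : 0 < M)
    (f g : ℂ → ℂ) (μ₀ g₁ θ₀ θ₁ : ℝ) (hμ₀ : 0 < μ₀)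
    (hf : DifferentiableOn ℂ f {z : ℂ | |z.im| < B})
    (hreal : ∀ x : ℝ, (f x).im = 0)
    (hbound : ∀ z ∈ {z : ℂ | |z.im| < B}, ‖f z‖ < M)
    (hg0 : g 0 = 1) (hgdiff : DifferentiableAt ℂ g 0) (hg1 : deriv g 0 = -g₁)
    (hrep : ∀ z ∈ {z : ℂ | |z.im| < B},
      f z = (M:ℂ) * (1 - 2 / ((μ₀:ℂ) * Complex.exp (Real.pi * z / (2*B)) *
        g (Complex.exp (Real.pi * z / B) - 1) + 1)))
    (hθ₀ : f 0 = (M:ℂ) * (θ₀:ℂ))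
    (hθ₁ : deriv f 0 = (Real.pi * M / B : ℂ) * (θ₁:ℂ)) :
    μ₀ = (1 + θ₀) / (1 - θ₀) ∧
    g₁ = (1 - 4*θ₁ - θ₀^2) / (2*(1 - θ₀^2)) ∧
    (0 < θ₁ ↔ g₁ < 1/2) ∧ (θ₁ < 0 ↔ g₁ > 1/2) ∧ (θ₁ = 0 ↔ g₁ = 1/2) :=
  g_fraction_first_coefficients_general B M hB hM f g μ₀ g₁ θ₀ θ₁ hμ₀ hg0 hgdiff hg1 hrep hθ₀ hθ₁
end

section
/- Under the assumptions of Sundman's theorem (all mutual distances exceed 2χ on an interval J, with the stated bounds on coordinate variations |x_i(z)-x_i(z₀)| < χ/7 etc. on the disk Δ_χ), each inverse mutual distance satisfies |r_{ij}(z)⁻¹| < 7/(4χ) for all z ∈ Δ_χ. More precisely: if X, Y : Δ_χ → ℂ³ are holomorphic with |X_k(z) - X_k(z₀)| < χ/7 and |Y_k(z) - Y_k(z₀)| < χ/7 for k = 1,2,3 and z ∈ Δ_χ, X(z₀), Y(z₀) ∈ ℝ³, and the real distance |X(z₀) - Y(z₀)| > 2χ, then |⟨X(z)-Y(z), X(z)-Y(z)⟩|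 > (4χ/7)² for all z ∈ Δ_χ, where ⟨·,·⟩ is the bilinear extension of the Euclidean inner product. -/
/-!
Write `X(z) - Y(z) = E + K(z)` with `E = X(z₀) - Y(z₀)` real and `‖K_k(z)‖ < 2χ/7`. Since `E` is
real, `⟨E, E⟩ = R²`, so the bilinear square of `E + K` differs from `R²` by at most
`3 (2R · 2χ/7 + (2χ/7)²)`. At `R = 2χ` this leaves exactly `(4χ/7)²`, and the margin
`R² - 12Rχ/7 - 12(χ/7)²` grows with `R` beyond `6χ/7`.
-/

open Complex

theorem Complex.sq_eq_norm_sq_of_im_eq_zero {z : ℂ} (hz : z.im = 0) :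
    z ^ 2 = ((‖z‖ ^ 2 : ℝ) : ℂ) := by
  lift z to ℝ using hz
  rw [norm_real, Real.norm_eq_abs, sq_abs, ofReal_pow]

theorem sum_norm_sq_sub_le_norm_sum_add_sq {ι : Type*} [Fintype ι] {E K : ι → ℂ}
    (hE : ∀ k, (E k).im = 0) {R δ : ℝ} (hER : ∀ k, ‖E k‖ ≤ R) (hKδ : ∀ k, ‖K k‖ ≤ δ) :
    ∑ k, ‖E k‖ ^ 2 - Fintype.card ι * (2 * R * δ + δ ^ 2) ≤ ‖∑ k, (E k + K k) ^ 2‖ := by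
  have hsplit : ∑ k, (E k + K k) ^ 2
      = ((∑ k, ‖E k‖ ^ 2 : ℝ) : ℂ) + ∑ k, (2 * E k * K k + K k ^ 2) := by
    push_cast
    rw [← Finset.sum_add_distrib]
    refine Finset.sum_congr rfl fun k _ => ?_
    rw [← ofReal_pow, ← sq_eq_norm_sq_of_im_eq_zero (hE k)]
    ring
  have hperturb : ‖∑ k, (2 * E k * K k + K k ^ 2)‖ ≤ Fintype.card ι * (2 * R * δ + δ ^ 2) := by
    calc ‖∑ k, (2 * E k * K k + K k ^ 2)‖
        ≤ ∑ k, (2 * ‖E k‖ * ‖K k‖ + ‖K k‖ ^ 2) := by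
          refine (norm_sum_le _ _).trans (Finset.sum_le_sum fun k _ => ?_)
          refine (norm_add_le _ _).trans_eq ?_
          simp only [norm_mul, norm_pow, RCLike.norm_ofNat]
      _ ≤ ∑ _k : ι, (2 * R * δ + δ ^ 2) := by
          refine Finset.sum_le_sum fun k _ => ?_
          have hK0 := norm_nonneg (K k)
          have hEK := mul_le_mul (hER k) (hKδ k) hK0 ((norm_nonneg _).trans (hER k))
          have hKK := pow_le_pow_left₀ hK0 (hKδ k) 2
          linarith
      _ = Fintype.card ι * (2 * R * δ + δ ^ 2) := by
          rw [Finset.sum_const, Finset.card_univ, nsmul_eq_mul]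
  have hmain := norm_sub_le_norm_add ((∑ k, ‖E k‖ ^ 2 : ℝ) : ℂ) (∑ k, (2 * E k * K k + K k ^ 2))
  rw [← hsplit, norm_real,
    Real.norm_of_nonneg (Finset.sum_nonneg fun k _ => sq_nonneg ‖E k‖)] at hmain
  linarith

theorem four_sevenths_sq_lt {χ R : ℝ} (hχ : 0 < χ) (hR : 2 * χ < R) :
    (4 * χ / 7) ^ 2 < R ^ 2 - 3 * (2 * R * (2 * χ / 7) + (2 * χ / 7) ^ 2) := by
  nlinarith [mul_pos (sub_pos.mpr hR) (by linarith : 0 < R + 2 * χ / 7)]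

theorem sundman_inverse_distance_bound_general (χ : ℝ) (z₀ : ℂ)
    (Δ : Set ℂ)
    (X Y : ℂ → Fin 3 → ℂ)
    (hXreal : ∀ k, (X z₀ k).im = 0) (hYreal : ∀ k, (Y z₀ k).im = 0)
    (hXvar : ∀ z ∈ Δ, ∀ k, ‖X z k - X z₀ k‖ < χ / 7)
    (hYvar : ∀ z ∈ Δ, ∀ k, ‖Y z k - Y z₀ k‖ < χ / 7)
    (hR : 2 * χ < Real.sqrt (∑ k, ‖X z₀ k - Y z₀ k‖ ^ 2)) :
    ∀ z ∈ Δ, (4 * χ / 7)^2 < ‖∑ k, (X z k - Y z k)^2‖ := by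
  intro z hz
  have hχ : 0 < χ := by linarith [(norm_nonneg _).trans_lt (hXvar z hz 0)]
  set E : Fin 3 → ℂ := fun k => X z₀ k - Y z₀ k
  set R := Real.sqrt (∑ k, ‖E k‖ ^ 2)
  have hEreal : ∀ k, (E k).im = 0 := fun k => by simp [E, hXreal k, hYreal k]
  have hER : ∀ k, ‖E k‖ ≤ R := fun k =>
    Real.le_sqrt_of_sq_le (Finset.single_le_sum (fun i _ => sq_nonneg ‖E i‖) (Finset.mem_univ k))
  have hK : ∀ k, ‖(X z k - X z₀ k) - (Y z k - Y z₀ k)‖ ≤ 2 * χ / 7 := fun k => by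
    linarith [norm_sub_le (X z k - X z₀ k) (Y z k - Y z₀ k), hXvar z hz k, hYvar z hz k]
  have hdecomp : ∑ k, (X z k - Y z k) ^ 2
      = ∑ k, (E k + ((X z k - X z₀ k) - (Y z k - Y z₀ k))) ^ 2 :=
    Finset.sum_congr rfl fun k _ => by simp only [E]; ring
  have hR2 : ∑ k, ‖E k‖ ^ 2 = R ^ 2 := (Real.sq_sqrt (by positivity)).symm
  have hlower := sum_norm_sq_sub_le_norm_sum_add_sq hEreal hER hK
  rw [hR2, Fintype.card_fin, ← hdecomp] at hlower
  push_cast at hlower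
  linarith [four_sevenths_sq_lt hχ hR]

/-- Sundman-type estimate: if `X, Y : Δ → ℂ³` have real values at `z₀`,
componentwise variations `< χ/7` on `Δ`, and the (real Euclidean) distance
`R = |X(z₀) - Y(z₀)|` satisfies `R > 2χ`, then for all `z ∈ Δ` the bilinear
square `⟨X(z)-Y(z), X(z)-Y(z)⟩ = Σ (X_k(z)-Y_k(z))²` has absolute value
`> (4χ/7)²`. -/
theorem sundman_inverse_distance_bound (χ : ℝ) (hχ : 0 < χ) (z₀ : ℂ)
    (Δ : Set ℂ) (hz₀ : z₀ ∈ Δ)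
    (X Y : ℂ → Fin 3 → ℂ)
    (hXreal : ∀ k, (X z₀ k).im = 0) (hYreal : ∀ k, (Y z₀ k).im = 0)
    (hXvar : ∀ z ∈ Δ, ∀ k, ‖X z k - X z₀ k‖ < χ / 7)
    (hYvar : ∀ z ∈ Δ, ∀ k, ‖Y z k - Y z₀ k‖ < χ / 7)
    (hR : 2 * χ < Real.sqrt (∑ k, ‖X z₀ k - Y z₀ k‖ ^ 2)) :
    ∀ z ∈ Δ, (4 * χ / 7)^2 < ‖∑ k, (X z k - Y z k)^2‖ :=
  sundman_inverse_distance_bound_general χ z₀ Δ X Y hXreal hYreal hXvar hYvar hR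
end

section
/- Let g₁, g₂ ∈ (0,1) with g₁ < 1/2 and 0 < g₂ < 1/2 and D₂ = g₁² - 4(1-g₁)²(1-g₂)g₂ ≥ 0. Then the smaller root t₁⁽²⁾ = (g₁ - √D₂)/(2(1-g₁)g₂) of P₂ satisfies t₁⁽²⁾ > 1, so that -1 + (t₁⁽²⁾)² > 0. -/
/-- Let `g₁, g₂ ∈ (0,1)` with `g₁ < 1/2`, `g₂ < 1/2` and
`D₂ = g₁² - 4(1-g₁)²(1-g₂)g₂ ≥ 0`. Then the smaller root
`t₁⁽²⁾ = (g₁ - √D₂)/(2(1-g₁)g₂)` of `P₂` satisfies `t₁⁽²⁾ > 1`,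
hence `-1 + (t₁⁽²⁾)² > 0`. -/
theorem smaller_root_gt_one (g₁ g₂ : ℝ) (hg₁ : g₁ ∈ Set.Ioo (0:ℝ) 1)
    (hg₂ : g₂ ∈ Set.Ioo (0:ℝ) 1) (h₁ : g₁ < 1/2) (h₂ : g₂ < 1/2)
    (hD : 0 ≤ g₁^2 - 4*(1 - g₁)^2*(1 - g₂)*g₂) :
    1 < (g₁ - Real.sqrt (g₁^2 - 4*(1 - g₁)^2*(1 - g₂)*g₂)) / (2*(1 - g₁)*g₂) ∧
    0 < -1 + ((g₁ - Real.sqrt (g₁^2 - 4*(1 - g₁)^2*(1 - g₂)*g₂)) / (2*(1 - g₁)*g₂))^2 := by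
  obtain ⟨hg1a, hg1b⟩ := hg₁
  obtain ⟨hg2a, hg2b⟩ := hg₂
  have hden : 0 < 2*(1 - g₁)*g₂ := by nlinarith
  have hgap : 2*(1 - g₁)*g₂ < g₁ := by nlinarith [sq_nonneg (g₁ - 2*(1-g₁)*g₂)]
  have hsq : g₁^2 - 4*(1 - g₁)^2*(1 - g₂)*g₂ < (g₁ - 2*(1 - g₁)*g₂)^2 := by nlinarith
  have hs : Real.sqrt (g₁^2 - 4*(1 - g₁)^2*(1 - g₂)*g₂) < g₁ - 2*(1 - g₁)*g₂ :=
    (Real.sqrt_lt' (by linarith)).mpr hsq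
  have ht : 1 < (g₁ - Real.sqrt (g₁^2 - 4*(1 - g₁)^2*(1 - g₂)*g₂)) / (2*(1 - g₁)*g₂) :=
    (one_lt_div hden).mpr (by linarith)
  exact ⟨ht, by nlinarith⟩
end
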